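/- Let G be a countable group equipped with a left-invariant proper metric d, and let H be a separable subgroup of G (i.e., H is the intersection of a family of finite index subgroups of G). Then H has bounded packing in G: for every positive constant D there exists a natural number N such that every collection of left H-cosets in G that are pairwise at distance at most D from each other has cardinality at most N. -/

import Mathlib

open scoped Pointwise

/-- The distance between two subsets of `G` induced by a metric `d`:
`inf { d x y : x ∈ A, y ∈ B }`. -/
noncomputable def cosetDist {G : Type*} (d : G → G → ℝ) (A B : Set G) : ℝ :=
  sInf {r : ℝ | ∃ x ∈ A, ∃ y ∈ B, d x y = r}

/-! Separability lets one pick a finite-index subgroup `L ≥ H` meeting the `(D + 1)`-ball only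
inside `H`. Two `H`-cosets at distance `≤ D` lying in the same `L`-coset then differ by an element
of `L` of length `< D + 1`, i.e. by an element of `H`, so they coincide. Hence a pairwise
`D`-close family of `H`-cosets injects into `G ⧸ L` and has at most `[G : L]` members. -/

theorem exists_lt_of_cosetDist_lt {G : Type*} {d : G → G → ℝ} {A B : Set G} {R : ℝ}
    (hA : A.Nonempty) (hB : B.Nonempty) (h : cosetDist d A B < R) :
    ∃ x ∈ A, ∃ y ∈ B, d x y < R := by
  obtain ⟨x, hx⟩ := hA
  obtain ⟨y, hy⟩ := hB
  obtain ⟨_, ⟨x', hx', y', hy', rfl⟩, hlt⟩ :=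
    exists_lt_of_csInf_lt (s := {r | ∃ x ∈ A, ∃ y ∈ B, d x y = r}) ⟨d x y, x, hx, y, hy, rfl⟩ h
  exact ⟨x', hx', y', hy', hlt⟩

namespace Subgroup

variable {G : Type*} [Group G]

theorem exists_finiteIndex_sInf_le_inter_subset {𝒮 : Set (Subgroup G)}
    (h𝒮 : ∀ K ∈ 𝒮, K.FiniteIndex) {F : Set G} (hF : F.Finite) :
    ∃ L : Subgroup G, L.FiniteIndex ∧ sInf 𝒮 ≤ L ∧ F ∩ L ⊆ (sInf 𝒮 : Subgroup G) := by
  have avoid : ∀ g : ↥(F \ (sInf 𝒮 : Subgroup G)), ∃ K ∈ 𝒮, (g : G) ∉ K := fun g => by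
    simpa [mem_sInf] using g.2.2
  choose K hK𝒮 hgK using avoid
  have : Finite ↥(F \ (sInf 𝒮 : Subgroup G)) := hF.sdiff.to_subtype
  refine ⟨⨅ g, K g, finiteIndex_iInf fun g => h𝒮 _ (hK𝒮 g),
    le_iInf fun g => sInf_le (hK𝒮 g), ?_⟩
  rintro g ⟨hgF, hgL⟩
  by_contra hg
  exact hgK ⟨g, hgF, hg⟩ (mem_iInf.mp hgL _)

variable {d : G → G → ℝ} {H L : Subgroup G} {R : ℝ}

theorem leftCoset_eq_of_cosetDist_lt (d_leftInvariant : ∀ g x y : G, d (g * x) (g * y) = d x y)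
    (hHL : H ≤ L) (hball : ∀ g ∈ L, d 1 g < R → g ∈ H) {a b : G}
    (hdist : cosetDist d (a • (H : Set G)) (b • (H : Set G)) < R) (hab : a⁻¹ * b ∈ L) :
    a • (H : Set G) = b • (H : Set G) := by
  obtain ⟨_, ⟨h₁, hh₁, rfl⟩, _, ⟨h₂, hh₂, rfl⟩, hlt⟩ :=
    exists_lt_of_cosetDist_lt (Set.smul_set_nonempty.mpr ⟨1, H.one_mem⟩)
      (Set.smul_set_nonempty.mpr ⟨1, H.one_mem⟩) hdist
  have hdiff : d 1 (h₁⁻¹ * (a⁻¹ * b) * h₂) < R := by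
    have := d_leftInvariant (a * h₁) 1 (h₁⁻¹ * (a⁻¹ * b) * h₂)
    simp only [mul_one, smul_eq_mul] at this hlt
    rwa [← this, show a * h₁ * (h₁⁻¹ * (a⁻¹ * b) * h₂) = b * h₂ by group]
  have hdiffH : h₁⁻¹ * (a⁻¹ * b) * h₂ ∈ H :=
    hball _ (L.mul_mem (L.mul_mem (L.inv_mem (hHL hh₁)) hab) (hHL hh₂)) hdiff
  refine (leftCoset_eq_iff H).mpr ?_
  simpa [mul_assoc] using H.mul_mem (H.mul_mem hh₁ hdiffH) (H.inv_mem hh₂)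

theorem finite_and_ncard_le_index_of_cosetDist_lt
    (d_leftInvariant : ∀ g x y : G, d (g * x) (g * y) = d x y) [L.FiniteIndex]
    (hHL : H ≤ L) (hball : ∀ g ∈ L, d 1 g < R → g ∈ H) {𝒞 : Set (Set G)}
    (h𝒞 : ∀ A ∈ 𝒞, ∃ g : G, A = g • (H : Set G))
    (hclose : ∀ A ∈ 𝒞, ∀ B ∈ 𝒞, cosetDist d A B < R) :
    𝒞.Finite ∧ 𝒞.ncard ≤ L.index := by
  choose! rep hrep using h𝒞
  have hinj : Set.InjOn (fun A => (rep A : G ⧸ L)) 𝒞 := by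
    intro A hA B hB hAB
    have hclose' := hclose A hA B hB
    rw [hrep A hA, hrep B hB] at hclose' ⊢
    exact leftCoset_eq_of_cosetDist_lt d_leftInvariant hHL hball hclose'
      (QuotientGroup.eq.mp hAB)
  have : Finite (G ⧸ L) := L.finite_quotient_of_finiteIndex
  refine ⟨(Set.finite_univ).of_injOn (Set.mapsTo_univ _ _) hinj, ?_⟩
  simpa [index_eq_card] using Set.ncard_le_ncard_of_injOn _ (fun _ _ => Set.mem_univ _) hinj

end Subgroup

theorem separable_subgroup_bounded_packing_general
    {G : Type*} [Group G]
    (d : G → G → ℝ)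
    (d_leftInvariant : ∀ g x y : G, d (g * x) (g * y) = d x y)
    (d_proper : ∀ R : ℝ, 0 < R → {g : G | d 1 g ≤ R}.Finite)
    (H : Subgroup G)
    (h_separable : ∃ 𝒮 : Set (Subgroup G),
      (∀ K ∈ 𝒮, K.FiniteIndex) ∧ H = sInf 𝒮) :
    ∀ D : ℝ, 0 < D → ∃ N : ℕ,
      ∀ 𝒞 : Set (Set G),
        (∀ A ∈ 𝒞, ∃ g : G, A = g • (H : Set G)) →
        (∀ A ∈ 𝒞, ∀ B ∈ 𝒞, cosetDist d A B ≤ D) →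
        𝒞.Finite ∧ 𝒞.ncard ≤ N := by
  obtain ⟨𝒮, h𝒮, rfl⟩ := h_separable
  intro D hD
  obtain ⟨L, hL, hHL, hball⟩ :=
    Subgroup.exists_finiteIndex_sInf_le_inter_subset h𝒮 (d_proper (D + 1) (by linarith))
  refine ⟨L.index, fun 𝒞 h𝒞 hclose => ?_⟩
  exact Subgroup.finite_and_ncard_le_index_of_cosetDist_lt (R := D + 1) d_leftInvariant hHL
    (fun g hgL hg => hball ⟨hg.le, hgL⟩) h𝒞
    fun A hA B hB => (hclose A hA B hB).trans_lt (by linarith)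

/-- If `H` is a separable subgroup of a countable group `G` equipped with a
left-invariant proper metric `d`, then `H` has bounded packing in `G`. -/
theorem separable_subgroup_bounded_packing
    {G : Type*} [Group G] [Countable G]
    (d : G → G → ℝ)
    (d_self : ∀ x y : G, d x y = 0 ↔ x = y)
    (d_symm : ∀ x y : G, d x y = d y x)
    (d_triangle : ∀ x y z : G, d x z ≤ d x y + d y z)
    (d_leftInvariant : ∀ g x y : G, d (g * x) (g * y) = d x y)
    (d_proper : ∀ R : ℝ, 0 < R → {g : G | d 1 g ≤ R}.Finite)
    (H : Subgroup G)
    (h_separable : ∃ 𝒮 : Set (Subgroup G),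
      (∀ K ∈ 𝒮, K.FiniteIndex) ∧ H = sInf 𝒮) :
    ∀ D : ℝ, 0 < D → ∃ N : ℕ,
      ∀ 𝒞 : Set (Set G),
        (∀ A ∈ 𝒞, ∃ g : G, A = g • (H : Set G)) →
        (∀ A ∈ 𝒞, ∀ B ∈ 𝒞, cosetDist d A B ≤ D) →
        𝒞.Finite ∧ 𝒞.ncard ≤ N :=
  separable_subgroup_bounded_packing_general d d_leftInvariant d_proper H h_separable
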